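/- Let A be the 2m×2m invertible block matrix [[Σ₀ + Ω_z, Σ_{0t}],[Σ_{t0}, Σ_t]] and B the block matrix [[Σ_x, Σ_x],[Σ_x, Σ_x]], where all blocks are m×m real matrices, Σ_t is invertible, and the Schur complement S := (Σ₀ + Ω_z) − Σ_{0t}Σ_t⁻¹Σ_{t0} is invertible. Then det(I_{2m} + A⁻¹B) = det(I_m + [Σ_t⁻¹ + (I − Σ_t⁻¹Σ_{t0}) S⁻¹ (I − Σ_{0t}Σ_t⁻¹)] Σ_x). -/

import Mathlib

/-!
Writing `B = [I; I] Σₓ [I I]`, Sylvester's identity `det (1 + U V) = det (1 + V U)` collapses the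
`2m × 2m` determinant to `det (1 + M Σₓ)`, where `M` is the sum of the four blocks of `A⁻¹`.
Inverting `A` through the Schur complement of `Σₜ` gives exactly the bracketed matrix for `M`.
-/
namespace Matrix

variable {n R : Type*} [Fintype n] [DecidableEq n]

def sumBlocks [Add R] (M : Matrix (n ⊕ n) (n ⊕ n) R) : Matrix n n R :=
  M.toBlocks₁₁ + M.toBlocks₁₂ + M.toBlocks₂₁ + M.toBlocks₂₂

theorem fromBlocks_self_eq_fromRows_mul_fromCols [Semiring R] (X : Matrix n n R) :
    fromBlocks X X X X = fromRows (1 : Matrix n n R) 1 * fromCols X X := by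
  simp

theorem det_one_add_mul_fromBlocks_self [CommRing R] (M : Matrix (n ⊕ n) (n ⊕ n) R)
    (X : Matrix n n R) :
    (1 + M * fromBlocks X X X X).det = (1 + M.sumBlocks * X).det := by
  rw [fromBlocks_self_eq_fromRows_mul_fromCols, ← Matrix.mul_assoc, det_one_add_mul_comm,
    ← Matrix.mul_assoc, ← fromBlocks_toBlocks M, fromCols_mul_fromBlocks, fromCols_mul_fromRows,
    det_one_add_mul_comm, sumBlocks]
  simp only [toBlocks_fromBlocks₁₁, toBlocks_fromBlocks₁₂, toBlocks_fromBlocks₂₁,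
    toBlocks_fromBlocks₂₂, Matrix.mul_one]
  congr 2
  noncomm_ring

theorem sumBlocks_inv_fromBlocks [CommRing R] (A B C D : Matrix n n R) (hD : IsUnit D.det)
    (hS : IsUnit (A - B * D⁻¹ * C).det) :
    (fromBlocks A B C D)⁻¹.sumBlocks =
      D⁻¹ + (1 - D⁻¹ * C) * (A - B * D⁻¹ * C)⁻¹ * (1 - B * D⁻¹) := by
  let := D.invertibleOfIsUnitDet hD
  let : Invertible (A - B * ⅟D * C) := by
    rw [invOf_eq_nonsing_inv]; exact invertibleOfIsUnitDet _ hS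
  let := fromBlocks₂₂Invertible A B C D
  simp only [sumBlocks, ← invOf_eq_nonsing_inv, invOf_fromBlocks₂₂_eq, toBlocks_fromBlocks₁₁,
    toBlocks_fromBlocks₁₂, toBlocks_fromBlocks₂₁, toBlocks_fromBlocks₂₂]
  noncomm_ring

end Matrix

theorem det_relevance_identity_general {m : ℕ}
    (S0 S0t St0 St Oz Sx : Matrix (Fin m) (Fin m) ℝ)
    (hSt : IsUnit St.det)
    (hS : IsUnit ((S0 + Oz) - S0t * St⁻¹ * St0).det) :
    (1 + (Matrix.fromBlocks (S0 + Oz) S0t St0 St)⁻¹ *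
        (Matrix.fromBlocks Sx Sx Sx Sx)).det =
      (1 + (St⁻¹ + (1 - St⁻¹ * St0) * ((S0 + Oz) - S0t * St⁻¹ * St0)⁻¹ *
        (1 - S0t * St⁻¹)) * Sx).det := by
  rw [Matrix.det_one_add_mul_fromBlocks_self, Matrix.sumBlocks_inv_fromBlocks _ _ _ _ hSt hS]

/-- For A = [[Σ₀ + Ω_z, Σ₀ₜ],[Σₜ₀, Σₜ]] invertible, B = [[Σₓ, Σₓ],[Σₓ, Σₓ]],
with Σₜ invertible and the Schur complement S := (Σ₀ + Ω_z) − Σ₀ₜ Σₜ⁻¹ Σₜ₀ invertible,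
det(I₂ₘ + A⁻¹B) = det(Iₘ + [Σₜ⁻¹ + (I − Σₜ⁻¹Σₜ₀) S⁻¹ (I − Σ₀ₜΣₜ⁻¹)] Σₓ). -/
theorem det_relevance_identity {m : ℕ}
    (S0 S0t St0 St Oz Sx : Matrix (Fin m) (Fin m) ℝ)
    (hSt : IsUnit St.det)
    (hS : IsUnit ((S0 + Oz) - S0t * St⁻¹ * St0).det)
    (hA : IsUnit (Matrix.fromBlocks (S0 + Oz) S0t St0 St).det) :
    (1 + (Matrix.fromBlocks (S0 + Oz) S0t St0 St)⁻¹ *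
        (Matrix.fromBlocks Sx Sx Sx Sx)).det =
      (1 + (St⁻¹ + (1 - St⁻¹ * St0) * ((S0 + Oz) - S0t * St⁻¹ * St0)⁻¹ *
        (1 - S0t * St⁻¹)) * Sx).det :=
  det_relevance_identity_general S0 S0t St0 St Oz Sx hSt hS
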